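/- Let Γ = ⟨ω, R, E⟩ be an (ℵ₀, κ) saS graph with κ > ℵ₀. Then for every finite partial function σ : ω → {+,−}, the set 𝓑_σ = {a ∈ R : ∀x ∈ dom σ, σ(x) = + iff {x,a} ∈ E} has cardinality κ. -/
import Mathlib


structure BipGraph (V : Type*) where
  L : Set V
  R : Set V
  Lne : L.Nonempty
  Rne : R.Nonempty
  disj : Disjoint L R
  E : V → V → Prop
  symm : ∀ x y, E x y → E y x
  bip : ∀ x y, E x y → (x ∈ L ∧ y ∈ R) ∨ (x ∈ R ∧ y ∈ L)

namespace BipGraph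

variable {V W : Type*}

def verts (Γ : BipGraph V) : Set V := Γ.L ∪ Γ.R

def nbr (Γ : BipGraph V) (v : V) : Set V := {u | Γ.E v u}

def IsComplete (Γ : BipGraph V) : Prop := ∀ x ∈ Γ.L, ∀ y ∈ Γ.R, Γ.E x y

def IsEmptyG (Γ : BipGraph V) : Prop := ∀ x y, ¬ Γ.E x y

def IsPartialIso (Γ : BipGraph V) (Γ' : BipGraph W) (s : Set V) (f : V → W) : Prop :=
  s ⊆ Γ.verts ∧ Set.InjOn f s ∧
  (∀ x ∈ s, x ∈ Γ.L → f x ∈ Γ'.L) ∧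
  (∀ x ∈ s, x ∈ Γ.R → f x ∈ Γ'.R) ∧
  (∀ x ∈ s, ∀ y ∈ s, (Γ.E x y ↔ Γ'.E (f x) (f y)))

def IsIso (Γ : BipGraph V) (Γ' : BipGraph W) (f : V → W) : Prop :=
  Set.BijOn f Γ.verts Γ'.verts ∧
  Set.MapsTo f Γ.L Γ'.L ∧ Set.MapsTo f Γ.R Γ'.R ∧
  (∀ x ∈ Γ.verts, ∀ y ∈ Γ.verts, (Γ.E x y ↔ Γ'.E (f x) (f y)))

def IsAuto (Γ : BipGraph V) (f : V → V) : Prop := Γ.IsIso Γ f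

def Homog (Γ : BipGraph V) : Prop :=
  ∀ (s : Set V) (f : V → V), s.Finite → Γ.IsPartialIso Γ s f →
    ∃ g : V → V, Γ.IsAuto g ∧ Set.EqOn f g s

def IsRandom (Γ : BipGraph V) : Prop :=
  Γ.L.Infinite ∧ Γ.R.Infinite ∧
  (∀ X Y : Set V, X ⊆ Γ.L → Y ⊆ Γ.L → X.Finite → Y.Finite → Disjoint X Y →
    {u ∈ Γ.R | (∀ x ∈ X, Γ.E x u) ∧ (∀ y ∈ Y, ¬ Γ.E y u)}.Infinite) ∧
  (∀ X Y : Set V, X ⊆ Γ.R → Y ⊆ Γ.R → X.Finite → Y.Finite → Disjoint X Y →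
    {u ∈ Γ.L | (∀ x ∈ X, Γ.E x u) ∧ (∀ y ∈ Y, ¬ Γ.E y u)}.Infinite)

def Ctble (Γ : BipGraph V) : Prop := Γ.L.Countable ∧ Γ.R.Countable

def IsSaS (Γ : BipGraph V) (κ μ : Cardinal) : Prop :=
  Γ.Homog ∧ ¬ Γ.IsComplete ∧ ¬ Γ.IsEmptyG ∧
  Cardinal.mk Γ.L = κ ∧ Cardinal.mk Γ.R = μ ∧ κ < μ

-- AUX LEMMAS

variable (Γ : BipGraph V)

lemma noEdge_LL {x y : V} (hx : x ∈ Γ.L) (hy : y ∈ Γ.L) : ¬ Γ.E x y := by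
  intro h
  rcases Γ.bip x y h with ⟨_, h2⟩ | ⟨h1, _⟩
  · exact Set.disjoint_left.1 Γ.disj hy h2
  · exact Set.disjoint_left.1 Γ.disj hx h1

lemma noEdge_RR {x y : V} (hx : x ∈ Γ.R) (hy : y ∈ Γ.R) : ¬ Γ.E x y := by
  intro h
  rcases Γ.bip x y h with ⟨h1, _⟩ | ⟨_, h2⟩
  · exact Set.disjoint_left.1 Γ.disj h1 hx
  · exact Set.disjoint_left.1 Γ.disj h2 hy

lemma L_sub_verts : Γ.L ⊆ Γ.verts := Set.subset_union_left
lemma R_sub_verts : Γ.R ⊆ Γ.verts := Set.subset_union_right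

section Auto
variable {Γ} {g : V → V}

lemma auto_mapsL (hg : Γ.IsAuto g) {x : V} (hx : x ∈ Γ.L) : g x ∈ Γ.L := hg.2.1 hx
lemma auto_mapsR (hg : Γ.IsAuto g) {a : V} (ha : a ∈ Γ.R) : g a ∈ Γ.R := hg.2.2.1 ha

lemma auto_edge (hg : Γ.IsAuto g) {x y : V} (hx : x ∈ Γ.verts) (hy : y ∈ Γ.verts) :
    Γ.E x y ↔ Γ.E (g x) (g y) := hg.2.2.2 x hx y hy

lemma auto_injOn (hg : Γ.IsAuto g) : Set.InjOn g Γ.verts := hg.1.2.1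

lemma auto_surjL (hg : Γ.IsAuto g) {y : V} (hy : y ∈ Γ.L) : ∃ x ∈ Γ.L, g x = y := by
  obtain ⟨x, hx, hgx⟩ := hg.1.2.2 (Γ.L_sub_verts hy)
  rcases hx with hx | hx
  · exact ⟨x, hx, hgx⟩
  · exact absurd (hgx ▸ auto_mapsR hg hx) (Set.disjoint_left.1 Γ.disj hy)

lemma auto_surjR (hg : Γ.IsAuto g) {b : V} (hb : b ∈ Γ.R) : ∃ a ∈ Γ.R, g a = b := by
  obtain ⟨a, ha, hga⟩ := hg.1.2.2 (Γ.R_sub_verts hb)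
  rcases ha with ha | ha
  · exact absurd hb (Set.disjoint_left.1 Γ.disj (hga ▸ auto_mapsL hg ha))
  · exact ⟨a, ha, hga⟩

lemma auto_nbr_image (hg : Γ.IsAuto g) {a : V} (ha : a ∈ Γ.R) :
    {x ∈ Γ.L | Γ.E x (g a)} = g '' {x ∈ Γ.L | Γ.E x a} := by
  ext y
  constructor
  · rintro ⟨hyL, hyE⟩
    obtain ⟨x, hxL, rfl⟩ := auto_surjL hg hyL
    exact ⟨x, ⟨hxL, (auto_edge hg (Γ.L_sub_verts hxL) (Γ.R_sub_verts ha)).2 hyE⟩, rfl⟩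
  · rintro ⟨x, ⟨hxL, hxE⟩, rfl⟩
    exact ⟨auto_mapsL hg hxL, (auto_edge hg (Γ.L_sub_verts hxL) (Γ.R_sub_verts ha)).1 hxE⟩

lemma auto_conbr_image (hg : Γ.IsAuto g) {a : V} (ha : a ∈ Γ.R) :
    {x ∈ Γ.L | ¬ Γ.E x (g a)} = g '' {x ∈ Γ.L | ¬ Γ.E x a} := by
  ext y
  constructor
  · rintro ⟨hyL, hyE⟩
    obtain ⟨x, hxL, rfl⟩ := auto_surjL hg hyL
    exact ⟨x, ⟨hxL, fun h => hyE ((auto_edge hg (Γ.L_sub_verts hxL) (Γ.R_sub_verts ha)).1 h)⟩, rfl⟩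
  · rintro ⟨x, ⟨hxL, hxE⟩, rfl⟩
    exact ⟨auto_mapsL hg hxL,
      fun h => hxE ((auto_edge hg (Γ.L_sub_verts hxL) (Γ.R_sub_verts ha)).2 h)⟩

end Auto

section Trans
variable {Γ}

lemma transR (hom : Γ.Homog) {a b : V} (ha : a ∈ Γ.R) (hb : b ∈ Γ.R) :
    ∃ g, Γ.IsAuto g ∧ g a = b := by
  obtain ⟨g, hg, heq⟩ := hom {a} (fun _ => b) (Set.finite_singleton a)
    ⟨by simpa using Γ.R_sub_verts ha,
     Set.injOn_singleton _ _,
     by rintro x rfl hx; exact absurd hx (Set.disjoint_right.1 Γ.disj ha),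
     by rintro x rfl _; exact hb,
     by rintro x rfl y rfl
        exact iff_of_false (Γ.noEdge_RR ha ha) (Γ.noEdge_RR hb hb)⟩
  exact ⟨g, hg, (heq rfl).symm⟩

lemma transL (hom : Γ.Homog) {x y : V} (hx : x ∈ Γ.L) (hy : y ∈ Γ.L) :
    ∃ g, Γ.IsAuto g ∧ g x = y := by
  obtain ⟨g, hg, heq⟩ := hom {x} (fun _ => y) (Set.finite_singleton x)
    ⟨by simpa using Γ.L_sub_verts hx,
     Set.injOn_singleton _ _,
     by rintro z rfl _; exact hy,
     by rintro z rfl hz; exact absurd hz (Set.disjoint_left.1 Γ.disj hx),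
     by rintro z rfl w rfl
        exact iff_of_false (Γ.noEdge_LL hx hx) (Γ.noEdge_LL hy hy)⟩
  exact ⟨g, hg, (heq rfl).symm⟩

lemma pairR (hom : Γ.Homog) {a b c d : V} (ha : a ∈ Γ.R) (hb : b ∈ Γ.R) (hc : c ∈ Γ.R) (hd : d ∈ Γ.R)
    (hab : a ≠ b) (hcd : c ≠ d) :
    ∃ g, Γ.IsAuto g ∧ g a = c ∧ g b = d := by
  classical
  set f : V → V := fun x => if x = a then c else d with hf
  have hfa : f a = c := by simp [hf]
  have hfb : f b = d := by simp [hf, hab.symm]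
  have hmem : ∀ x ∈ ({a, b} : Set V), x ∈ Γ.R := by rintro x (rfl | rfl) <;> assumption
  have hfmem : ∀ x ∈ ({a, b} : Set V), f x ∈ Γ.R := by
    rintro x (rfl | rfl)
    · rw [hfa]; exact hc
    · rw [hfb]; exact hd
  obtain ⟨g, hg, heq⟩ := hom {a, b} f ((Set.finite_singleton b).insert a)
    ⟨fun x hx => Γ.R_sub_verts (hmem x hx),
     by
       rintro x (rfl | rfl) y (rfl | rfl) hxy <;> try rfl
       · rw [hfa, hfb] at hxy; exact absurd hxy hcd
       · rw [hfa, hfb] at hxy; exact absurd hxy.symm hcd,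
     fun x hx hxL => absurd hxL (Set.disjoint_right.1 Γ.disj (hmem x hx)),
     fun x hx _ => hfmem x hx,
     fun x hx y hy => iff_of_false (Γ.noEdge_RR (hmem x hx) (hmem y hy))
       (Γ.noEdge_RR (hfmem x hx) (hfmem y hy))⟩
  refine ⟨g, hg, ?_, ?_⟩
  · rw [← heq (show a ∈ ({a, b} : Set V) by simp), hfa]
  · rw [← heq (show b ∈ ({a, b} : Set V) by simp), hfb]

end Trans

section PhaseI
variable {Γ : BipGraph V}

lemma nbr_L_infinite (hom : Γ.Homog) (hne : ¬ Γ.IsEmptyG) (hLinf : Γ.L.Infinite)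
    (hLc : Γ.L.Countable) (hκ : Cardinal.aleph0 < Cardinal.mk Γ.R) :
    ∀ a ∈ Γ.R, {x ∈ Γ.L | Γ.E x a}.Infinite := by
  intro a₀ ha₀
  by_contra hfin
  rw [Set.not_infinite] at hfin
  -- all neighborhoods finite
  have hall : ∀ a ∈ Γ.R, {x ∈ Γ.L | Γ.E x a}.Finite := by
    intro a ha
    obtain ⟨g, hg, hga⟩ := transR hom ha₀ ha
    rw [← hga, auto_nbr_image hg ha₀]
    exact hfin.image g
  -- pigeonhole : two right vertices with equal neighborhoods
  set S : Set (Set V) := {t | t.Finite ∧ t ⊆ Γ.L} with hS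
  have hScnt : S.Countable := Set.countable_setOf_finite_subset hLc
  set φ : Γ.R → S := fun a => ⟨{x ∈ Γ.L | Γ.E x a.1}, hall a.1 a.2, Set.sep_subset _ _⟩ with hφ
  have hninj : ¬ Function.Injective φ := by
    intro hinj
    have h1 : Cardinal.mk Γ.R ≤ Cardinal.mk S := Cardinal.mk_le_of_injective hinj
    have : Countable S := hScnt.to_subtype
    exact hκ.not_ge (h1.trans Cardinal.mk_le_aleph0)
  obtain ⟨a, b, hphab, hab⟩ := Function.not_injective_iff.1 hninj
  have hab' : (a : V) ≠ (b : V) := fun h => hab (Subtype.ext h)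
  have hNab : {x ∈ Γ.L | Γ.E x (a : V)} = {x ∈ Γ.L | Γ.E x (b : V)} :=
    congrArg Subtype.val hphab
  -- all neighborhoods are equal
  have key : ∀ c ∈ Γ.R, ∀ d ∈ Γ.R,
      {x ∈ Γ.L | Γ.E x c} = {x ∈ Γ.L | Γ.E x d} := by
    intro c hc d hd
    by_cases hcd : c = d
    · rw [hcd]
    · obtain ⟨g, hg, hgac, hgbd⟩ := pairR hom a.2 b.2 hc hd hab' hcd
      rw [← hgac, ← hgbd, auto_nbr_image hg a.2, auto_nbr_image hg b.2, hNab]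
  -- a vertex outside the common neighborhood, contradiction
  have hne' : ∃ x ∈ Γ.L, ∃ b ∈ Γ.R, Γ.E x b := by
    simp only [IsEmptyG, not_forall, not_not] at hne
    obtain ⟨x, y, hxy⟩ := hne
    rcases Γ.bip x y hxy with ⟨hxL, hyR⟩ | ⟨hxR, hyL⟩
    · exact ⟨x, hxL, y, hyR, hxy⟩
    · exact ⟨y, hyL, x, hxR, Γ.symm x y hxy⟩
  obtain ⟨x₀, hx₀L, b₀, hb₀R, hE⟩ := hne'
  obtain ⟨y, hy⟩ := (hLinf.diff hfin).nonempty
  obtain ⟨g, hg, hgx⟩ := transL hom hx₀L hy.1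
  have hEy : Γ.E y (g b₀) := by
    rw [← hgx]
    exact (auto_edge hg (Γ.L_sub_verts hx₀L) (Γ.R_sub_verts hb₀R)).1 hE
  have : y ∈ {x ∈ Γ.L | Γ.E x a₀} := by
    rw [key a₀ ha₀ (g b₀) (auto_mapsR hg hb₀R)]
    exact ⟨hy.1, hEy⟩
  exact hy.2 this

lemma conbr_L_infinite (hom : Γ.Homog) (hnc : ¬ Γ.IsComplete) (hLinf : Γ.L.Infinite)
    (hLc : Γ.L.Countable) (hκ : Cardinal.aleph0 < Cardinal.mk Γ.R) :
    ∀ a ∈ Γ.R, {x ∈ Γ.L | ¬ Γ.E x a}.Infinite := by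
  intro a₀ ha₀
  by_contra hfin
  rw [Set.not_infinite] at hfin
  have hall : ∀ a ∈ Γ.R, {x ∈ Γ.L | ¬ Γ.E x a}.Finite := by
    intro a ha
    obtain ⟨g, hg, hga⟩ := transR hom ha₀ ha
    rw [← hga, auto_conbr_image hg ha₀]
    exact hfin.image g
  set S : Set (Set V) := {t | t.Finite ∧ t ⊆ Γ.L} with hS
  have hScnt : S.Countable := Set.countable_setOf_finite_subset hLc
  set φ : Γ.R → S := fun a => ⟨{x ∈ Γ.L | ¬ Γ.E x a.1}, hall a.1 a.2, Set.sep_subset _ _⟩ with hφ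
  have hninj : ¬ Function.Injective φ := by
    intro hinj
    have h1 : Cardinal.mk Γ.R ≤ Cardinal.mk S := Cardinal.mk_le_of_injective hinj
    have : Countable S := hScnt.to_subtype
    exact hκ.not_ge (h1.trans Cardinal.mk_le_aleph0)
  obtain ⟨a, b, hphab, hab⟩ := Function.not_injective_iff.1 hninj
  have hab' : (a : V) ≠ (b : V) := fun h => hab (Subtype.ext h)
  have hNab : {x ∈ Γ.L | ¬ Γ.E x (a : V)} = {x ∈ Γ.L | ¬ Γ.E x (b : V)} :=
    congrArg Subtype.val hphab
  have key : ∀ c ∈ Γ.R, ∀ d ∈ Γ.R,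
      {x ∈ Γ.L | ¬ Γ.E x c} = {x ∈ Γ.L | ¬ Γ.E x d} := by
    intro c hc d hd
    by_cases hcd : c = d
    · rw [hcd]
    · obtain ⟨g, hg, hgac, hgbd⟩ := pairR hom a.2 b.2 hc hd hab' hcd
      rw [← hgac, ← hgbd, auto_conbr_image hg a.2, auto_conbr_image hg b.2, hNab]
  have hnc' : ∃ x ∈ Γ.L, ∃ b ∈ Γ.R, ¬ Γ.E x b := by
    simp only [IsComplete, not_forall] at hnc
    obtain ⟨x, hxL, y, hyR, hxy⟩ := hnc
    exact ⟨x, hxL, y, hyR, hxy⟩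
  obtain ⟨x₁, hx₁L, a₁, ha₁R, hnE⟩ := hnc'
  obtain ⟨y, hy⟩ := (hLinf.diff hfin).nonempty
  -- y is adjacent to every right vertex
  have hyall : ∀ b ∈ Γ.R, Γ.E y b := by
    intro b hb
    by_contra hnb
    have : y ∈ {x ∈ Γ.L | ¬ Γ.E x a₀} := by
      rw [key a₀ ha₀ b hb]
      exact ⟨hy.1, hnb⟩
    exact hy.2 this
  obtain ⟨g, hg, hgy⟩ := transL hom hy.1 hx₁L
  obtain ⟨b, hbR, hgb⟩ := auto_surjR hg ha₁R
  have : Γ.E x₁ a₁ := by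
    rw [← hgy, ← hgb]
    exact (auto_edge hg (Γ.L_sub_verts hy.1) (Γ.R_sub_verts hbR)).1 (hyall b hbR)
  exact hnE this

end PhaseI

section PhaseII
variable {Γ : BipGraph V}

lemma pattern_le (hom : Γ.Homog) (P N P' N' : Finset V)
    (hP : ↑P ⊆ Γ.L) (hN : ↑N ⊆ Γ.L) (hPN : Disjoint P N)
    (hP' : ↑P' ⊆ Γ.L) (hN' : ↑N' ⊆ Γ.L) (hPN' : Disjoint P' N')
    (hcP : P'.card = P.card) (hcN : N'.card = N.card) :
    Cardinal.mk {a | a ∈ Γ.R ∧ (∀ x ∈ P', Γ.E x a) ∧ (∀ x ∈ N', ¬ Γ.E x a)} ≤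
      Cardinal.mk {a | a ∈ Γ.R ∧ (∀ x ∈ P, Γ.E x a) ∧ (∀ x ∈ N, ¬ Γ.E x a)} := by
  classical
  set e₁ : {x // x ∈ P'} ≃ {x // x ∈ P} := Finset.equivOfCardEq hcP with he₁
  set e₂ : {x // x ∈ N'} ≃ {x // x ∈ N} := Finset.equivOfCardEq hcN with he₂
  set f : V → V := fun x =>
    if h : x ∈ P' then ↑(e₁ ⟨x, h⟩) else if h : x ∈ N' then ↑(e₂ ⟨x, h⟩) else x with hf
  have hfP : ∀ x (h : x ∈ P'), f x = ↑(e₁ ⟨x, h⟩) := by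
    intro x h; simp only [hf, dif_pos h]
  have hfN : ∀ x (h : x ∈ N'), f x = ↑(e₂ ⟨x, h⟩) := by
    intro x h
    have hx : x ∉ P' := Finset.disjoint_right.1 hPN' h
    simp only [hf, dif_neg hx, dif_pos h]
  have hfPmem : ∀ x (h : x ∈ P'), f x ∈ P := by
    intro x h; rw [hfP x h]; exact (e₁ ⟨x, h⟩).2
  have hfNmem : ∀ x (h : x ∈ N'), f x ∈ N := by
    intro x h; rw [hfN x h]; exact (e₂ ⟨x, h⟩).2
  have hsubL : (↑(P' ∪ N') : Set V) ⊆ Γ.L := by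
    rw [Finset.coe_union]
    exact Set.union_subset hP' hN'
  have hfL : ∀ x ∈ (↑(P' ∪ N') : Set V), f x ∈ Γ.L := by
    intro x hx
    rcases Finset.mem_union.1 hx with h | h
    · exact hP (hfPmem x h)
    · exact hN (hfNmem x h)
  have hinj : Set.InjOn f ↑(P' ∪ N') := by
    intro x hx y hy hxy
    rcases Finset.mem_union.1 hx with h1 | h1 <;> rcases Finset.mem_union.1 hy with h2 | h2
    · have := hxy
      rw [hfP x h1, hfP y h2] at this
      have : (⟨x, h1⟩ : {x // x ∈ P'}) = ⟨y, h2⟩ := e₁.injective (Subtype.ext this)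
      exact congrArg Subtype.val this
    · exact absurd ((hxy ▸ hfPmem x h1)) (Finset.disjoint_right.1 hPN (hxy ▸ hfNmem y h2))
    · exact absurd ((hxy.symm ▸ hfPmem y h2)) (Finset.disjoint_right.1 hPN (hxy.symm ▸ hfNmem x h1))
    · have := hxy
      rw [hfN x h1, hfN y h2] at this
      have : (⟨x, h1⟩ : {x // x ∈ N'}) = ⟨y, h2⟩ := e₂.injective (Subtype.ext this)
      exact congrArg Subtype.val this
  obtain ⟨g, hg, heq⟩ := hom ↑(P' ∪ N') f (P' ∪ N').finite_toSet
    ⟨fun x hx => Γ.L_sub_verts (hsubL hx), hinj,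
     fun x hx _ => hfL x hx,
     fun x hx hxR => absurd hxR (Set.disjoint_left.1 Γ.disj (hsubL hx)),
     fun x hx y hy => iff_of_false (Γ.noEdge_LL (hsubL hx) (hsubL hy))
       (Γ.noEdge_LL (hfL x hx) (hfL y hy))⟩
  -- g maps the primed pattern set into the unprimed one
  have hmap : ∀ a, a ∈ Γ.R → (∀ x ∈ P', Γ.E x a) → (∀ x ∈ N', ¬ Γ.E x a) →
      g a ∈ Γ.R ∧ (∀ x ∈ P, Γ.E x (g a)) ∧ (∀ x ∈ N, ¬ Γ.E x (g a)) := by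
    intro a haR haP haN
    refine ⟨auto_mapsR hg haR, ?_, ?_⟩
    · intro x hx
      set x' := e₁.symm ⟨x, hx⟩ with hx'
      have hx'P : (x' : V) ∈ P' := x'.2
      have hgx' : g (x' : V) = x := by
        rw [← heq (Finset.mem_coe.2 (Finset.mem_union_left _ hx'P)), hfP _ hx'P]
        simp [hx']
      rw [← hgx']
      exact (auto_edge hg (Γ.L_sub_verts (hP' hx'P)) (Γ.R_sub_verts haR)).1 (haP _ hx'P)
    · intro x hx
      set x' := e₂.symm ⟨x, hx⟩ with hx'
      have hx'N : (x' : V) ∈ N' := x'.2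
      have hgx' : g (x' : V) = x := by
        rw [← heq (Finset.mem_coe.2 (Finset.mem_union_right _ hx'N)), hfN _ hx'N]
        simp [hx']
      rw [← hgx']
      intro hcon
      exact haN _ hx'N ((auto_edge hg (Γ.L_sub_verts (hN' hx'N)) (Γ.R_sub_verts haR)).2 hcon)
  refine Cardinal.mk_le_of_injective (f := fun a : {a | a ∈ Γ.R ∧ (∀ x ∈ P', Γ.E x a) ∧
      (∀ x ∈ N', ¬ Γ.E x a)} => (⟨g a.1, hmap a.1 a.2.1 a.2.2.1 a.2.2.2⟩ :
      {a | a ∈ Γ.R ∧ (∀ x ∈ P, Γ.E x a) ∧ (∀ x ∈ N, ¬ Γ.E x a)})) ?_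
  intro a b hab
  have : g a.1 = g b.1 := congrArg Subtype.val hab
  exact Subtype.ext (auto_injOn hg (Γ.R_sub_verts a.2.1) (Γ.R_sub_verts b.2.1) this)

end PhaseII

end BipGraph

theorem saS_pattern_sets_have_full_cardinality {V : Type*} (κ : Cardinal)
    (hκ : Cardinal.aleph0 < κ) (Γ : BipGraph V)
    (hΓ : Γ.IsSaS Cardinal.aleph0 κ)
    (P N : Finset V) (hP : ↑P ⊆ Γ.L) (hN : ↑N ⊆ Γ.L) (hPN : Disjoint P N) :
    Cardinal.mk {a | a ∈ Γ.R ∧ (∀ x ∈ P, Γ.E x a) ∧ (∀ x ∈ N, ¬ Γ.E x a)} = κ := by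
  classical
  obtain ⟨hom, hnc, hne, hmkL, hmkR, -⟩ := hΓ
  have hLc : Γ.L.Countable := by
    rw [← Set.countable_coe_iff]
    exact Cardinal.mk_le_aleph0_iff.1 (le_of_eq hmkL)
  have hLinf : Γ.L.Infinite := by
    rw [← Set.infinite_coe_iff]
    exact Cardinal.aleph0_le_mk_iff.1 (ge_of_eq hmkL)
  have hκR : Cardinal.aleph0 < Cardinal.mk Γ.R := by rw [hmkR]; exact hκ
  set B : Set V := {a | a ∈ Γ.R ∧ (∀ x ∈ P, Γ.E x a) ∧ (∀ x ∈ N, ¬ Γ.E x a)} with hB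
  have hBsub : B ⊆ Γ.R := fun a ha => ha.1
  have hle : Cardinal.mk B ≤ κ := by
    rw [← hmkR]
    exact Cardinal.mk_le_mk_of_subset hBsub
  -- the countable family of pattern sets of the same shape
  set ι := {q : Finset V × Finset V // ↑q.1 ⊆ Γ.L ∧ ↑q.2 ⊆ Γ.L ∧ Disjoint q.1 q.2 ∧
      q.1.card = P.card ∧ q.2.card = N.card} with hι
  set Bq : ι → Set V := fun q =>
    {a | a ∈ Γ.R ∧ (∀ x ∈ q.1.1, Γ.E x a) ∧ (∀ x ∈ q.1.2, ¬ Γ.E x a)} with hBq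
  have hcover : Γ.R ⊆ ⋃ q, Bq q := by
    intro a ha
    obtain ⟨P', hP'sub, hP'card⟩ :=
      (BipGraph.nbr_L_infinite hom hne hLinf hLc hκR a ha).exists_subset_card_eq P.card
    obtain ⟨N', hN'sub, hN'card⟩ :=
      (BipGraph.conbr_L_infinite hom hnc hLinf hLc hκR a ha).exists_subset_card_eq N.card
    have hdisj : Disjoint P' N' := by
      rw [Finset.disjoint_left]
      intro x hx hx'
      exact (hN'sub hx').2 (hP'sub hx).2
    refine Set.mem_iUnion.2 ⟨⟨(P', N'), fun x hx => (hP'sub hx).1, fun x hx => (hN'sub hx).1,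
      hdisj, hP'card, hN'card⟩, ha, fun x hx => (hP'sub hx).2, fun x hx => (hN'sub hx).2⟩
  have hιcnt : Cardinal.mk ι ≤ Cardinal.aleph0 := by
    set S : Set (Set V) := {t | t.Finite ∧ t ⊆ Γ.L} with hS
    have hScnt : S.Countable := Set.countable_setOf_finite_subset hLc
    have : Countable S := hScnt.to_subtype
    have : Countable (S × S) := instCountableProd
    set ψ : ι → S × S := fun q =>
      (⟨↑q.1.1, q.1.1.finite_toSet, q.2.1⟩, ⟨↑q.1.2, q.1.2.finite_toSet, q.2.2.1⟩) with hψ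
    have hψinj : Function.Injective ψ := by
      intro q q' h
      have h1 : (↑q.1.1 : Set V) = ↑q'.1.1 := congrArg Subtype.val (congrArg Prod.fst h)
      have h2 : (↑q.1.2 : Set V) = ↑q'.1.2 := congrArg Subtype.val (congrArg Prod.snd h)
      exact Subtype.ext (Prod.ext (Finset.coe_injective h1) (Finset.coe_injective h2))
    exact (Cardinal.mk_le_of_injective hψinj).trans Cardinal.mk_le_aleph0
  have hBqle : ∀ q : ι, Cardinal.mk (Bq q) ≤ Cardinal.mk B :=
    fun q => BipGraph.pattern_le hom P N q.1.1 q.1.2 hP hN hPN q.2.1 q.2.2.1 q.2.2.2.1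
      q.2.2.2.2.1 q.2.2.2.2.2
  have hchain : κ ≤ Cardinal.aleph0 * Cardinal.mk B := by
    calc κ = Cardinal.mk Γ.R := hmkR.symm
    _ ≤ Cardinal.mk (⋃ q, Bq q) := Cardinal.mk_le_mk_of_subset hcover
    _ ≤ Cardinal.sum (fun q => Cardinal.mk (Bq q)) := Cardinal.mk_iUnion_le_sum_mk
    _ ≤ Cardinal.sum (fun _ : ι => Cardinal.mk B) := Cardinal.sum_le_sum _ _ hBqle
    _ = Cardinal.mk ι * Cardinal.mk B := Cardinal.sum_const' _ _
    _ ≤ Cardinal.aleph0 * Cardinal.mk B := mul_le_mul_left hιcnt _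
  have hBinf : Cardinal.aleph0 ≤ Cardinal.mk B := by
    by_contra h
    push_neg at h
    have : Cardinal.aleph0 * Cardinal.mk B ≤ Cardinal.aleph0 * Cardinal.aleph0 :=
      mul_le_mul_right h.le _
    rw [Cardinal.aleph0_mul_aleph0] at this
    exact hκ.not_ge (hchain.trans this)
  have : Cardinal.aleph0 * Cardinal.mk B = Cardinal.mk B :=
    Cardinal.mul_eq_right hBinf hBinf Cardinal.aleph0_ne_zero
  exact le_antisymm hle (this ▸ hchain)
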